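/- Suppose (X,∗) is an unloopable compact geodesic metric space with residually finite, finitely generated fundamental group G = π₁(X,∗), and let (sol X, σ, ∗) be the quotient (Ĝ × X̃)/G with the quotient metric σ and basepoint ∗ = [(1,∗̃)]. If f, g : (sol X,∗) → (sol X,∗) are pointed continuous maps such that f∘g and g∘f are each homotopic to the identity, then there exists a constant C such that d_X((f∘g)_X̃(p), p) ≤ C and d_X((g∘f)_X̃(p), p) ≤ C for all p ∈ X̃. -/

import Mathlib

open scoped Classical

/-- The intersection `G_{≤n}` of all subgroups of `G` of (finite) index at most `n`. -/
def subLE (G : Type*) [Group G] (n : ℕ) : Subgroup G :=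
  ⨅ (H : Subgroup G) (_ : H.FiniteIndex ∧ H.index ≤ n), H

/-- The profinite pseudometric `d̂` on a group `G`. -/
noncomputable def dhat (G : Type*) [Group G] (g₁ g₂ : G) : ℝ :=
  if ∀ H : Subgroup G, H.FiniteIndex → g₁ * g₂⁻¹ ∈ H then 0
  else Real.exp (-(sSup {n : ℕ | g₁ * g₂⁻¹ ∈ subLE G n} : ℕ))

/-- A metric space is geodesic if any two points are joined by an isometrically
embedded segment. -/
def IsGeodesicMetricSpace (X : Type*) [MetricSpace X] : Prop :=
  ∀ x y : X, ∃ f : ℝ → X, f 0 = x ∧ f (dist x y) = y ∧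
    ∀ s ∈ Set.Icc (0 : ℝ) (dist x y), ∀ t ∈ Set.Icc (0 : ℝ) (dist x y),
      dist (f s) (f t) = |s - t|

/-- The injectivity radius of a covering projection `p : X̃ → X`. -/
noncomputable def injrad {X Xt : Type*} [MetricSpace X] [MetricSpace Xt] (p : Xt → X) : ℝ :=
  sSup {R : ℝ | 0 ≤ R ∧ ∀ x : Xt, ∀ y ∈ Metric.ball x R, ∀ z ∈ Metric.ball x R,
    dist (p y) (p z) = dist y z}

section MetricSolenoid

variable {G Ghat Xt : Type*} [Group G] [MulAction G Xt]

/-- The orbit equivalence relation for the diagonal `G`-action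
`g · (γ, x) = (γ·ĝ⁻¹, g·x)` on `Ĝ × X̃`, where the action on the first factor is
specified by `act`. -/
def solRel (act : G → Ghat → Ghat) (p q : Ghat × Xt) : Prop :=
  ∃ g : G, act g p.1 = q.1 ∧ g • p.2 = q.2

/-- The metric model of the full solenoid: the quotient `(Ĝ × X̃)/G`. -/
def MSol (act : G → Ghat → Ghat) := Quot (solRel (Xt := Xt) act)

variable [MetricSpace Ghat] [MetricSpace Xt]

instance (act : G → Ghat → Ghat) : TopologicalSpace (MSol (Xt := Xt) act) :=
  instTopologicalSpaceQuot

/-- The solenoid (quotient) metric `σ` on `(Ĝ × X̃)/G`: the infimum of the `ℓ∞` product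
distance over orbit representatives. -/
noncomputable def msodist (act : G → Ghat → Ghat) (u v : MSol (Xt := Xt) act) : ℝ :=
  sInf {r : ℝ | ∃ a b : Ghat × Xt, Quot.mk _ a = u ∧ Quot.mk _ b = v ∧ dist a b = r}

/-- The baseleaf map `X̃ → (Ĝ × X̃)/G`, `x ↦ [(1̂, x)]`. -/
def mleaf (act : G → Ghat → Ghat) (ι : G → Ghat) (x : Xt) : MSol (Xt := Xt) act :=
  Quot.mk _ (ι 1, x)

/-- The basepoint `[(1̂, ∗̃)]` of the metric solenoid. -/
def mpt (act : G → Ghat → Ghat) (ι : G → Ghat) (xt₀ : Xt) : MSol (Xt := Xt) act :=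
  mleaf act ι xt₀

/-- The baseleaf restriction `f_X̃` of a self-map `f` of the solenoid: the restriction
of `f` to the (injectively embedded) baseleaf `X̃ ⊆ (Ĝ × X̃)/G`. -/
noncomputable def leafRestrict [Nonempty Xt] (act : G → Ghat → Ghat) (ι : G → Ghat)
    (f : MSol (Xt := Xt) act → MSol (Xt := Xt) act) : Xt → Xt :=
  fun x => Function.invFun (mleaf act ι) (f (mleaf act ι x))

end MetricSolenoid

lemma mem_subLE_iff {G : Type*} [Group G] {n : ℕ} {x : G} :
    x ∈ subLE G n ↔ ∀ H : Subgroup G, H.FiniteIndex → H.index ≤ n → x ∈ H := by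
  simp [subLE, Subgroup.mem_iInf, and_imp]

lemma subLE_anti {G : Type*} [Group G] {m n : ℕ} (h : m ≤ n) : subLE G n ≤ subLE G m := by
  intro x hx
  rw [mem_subLE_iff] at hx ⊢
  exact fun H h1 h2 => hx H h1 (h2.trans h)

lemma zero_mem_AdhSet {G : Type*} [Group G] (x : G) : x ∈ subLE G 0 := by
  rw [mem_subLE_iff]
  intro H h1 h2
  exact absurd (Nat.le_zero.mp h2) h1.index_ne_zero

lemma dhat_nonneg {G : Type*} [Group G] (g h : G) : 0 ≤ dhat G g h := by
  unfold dhat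
  split
  · exact le_rfl
  · exact (Real.exp_pos _).le

lemma dhat_zero_iff {G : Type*} [Group G] (g h : G) :
    dhat G g h = 0 ↔ ∀ H : Subgroup G, H.FiniteIndex → g * h⁻¹ ∈ H := by
  unfold dhat
  split
  · exact iff_of_true rfl (by assumption)
  · exact iff_of_false (Real.exp_pos _).ne' (by assumption)

lemma AdhSet_bdd {G : Type*} [Group G] {x : G} (hx : ¬ ∀ H : Subgroup G, H.FiniteIndex → x ∈ H) :
    BddAbove {n : ℕ | x ∈ subLE G n} := by
  push_neg at hx
  obtain ⟨H, hHfi, hxH⟩ := hx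
  refine ⟨H.index, fun n hn => ?_⟩
  by_contra hlt
  push_neg at hlt
  exact hxH (mem_subLE_iff.mp hn H hHfi hlt.le)

lemma le_sSup_AdhSet {G : Type*} [Group G] {x : G} (hx : ¬ ∀ H : Subgroup G, H.FiniteIndex → x ∈ H)
    {n : ℕ} (hn : x ∈ subLE G n) : n ≤ sSup {n : ℕ | x ∈ subLE G n} :=
  le_csSup (AdhSet_bdd hx) hn

lemma sSup_AdhSet_mem {G : Type*} [Group G] {x : G}
    (hx : ¬ ∀ H : Subgroup G, H.FiniteIndex → x ∈ H) :
    x ∈ subLE G (sSup {n : ℕ | x ∈ subLE G n}) :=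
  Nat.sSup_mem ⟨0, zero_mem_AdhSet x⟩ (AdhSet_bdd hx)

lemma dhat_ultra {G : Type*} [Group G] (g h k : G) :
    dhat G g k ≤ max (dhat G g h) (dhat G h k) := by
  set a := g * h⁻¹ with ha
  set b := h * k⁻¹ with hb
  have hab : g * k⁻¹ = a * b := by rw [ha, hb]; group
  by_cases hk : ∀ H : Subgroup G, H.FiniteIndex → g * k⁻¹ ∈ H
  · rw [(dhat_zero_iff g k).mpr hk]
    exact le_max_of_le_left (dhat_nonneg g h)
  · have hgk : dhat G g k = Real.exp (-(sSup {n : ℕ | g * k⁻¹ ∈ subLE G n} : ℕ)) := by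
      unfold dhat; rw [if_neg hk]
    by_cases hga : ∀ H : Subgroup G, H.FiniteIndex → a ∈ H
    · -- a in everything; then dhat g k ≤ dhat h k
      by_cases hgb : ∀ H : Subgroup G, H.FiniteIndex → b ∈ H
      · exact absurd (fun H hH => by rw [hab]; exact H.mul_mem (hga H hH) (hgb H hH)) hk
      · refine le_max_of_le_right ?_
        have hhk : dhat G h k = Real.exp (-(sSup {n : ℕ | b ∈ subLE G n} : ℕ)) := by
          unfold dhat; rw [if_neg hgb]
        rw [hgk, hhk, Real.exp_le_exp, neg_le_neg_iff, Nat.cast_le]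
        refine le_sSup_AdhSet hk ?_
        rw [hab]
        refine (subLE _ _).mul_mem ?_ (sSup_AdhSet_mem hgb)
        rw [mem_subLE_iff]
        exact fun H h1 _ => hga H h1
    · by_cases hgb : ∀ H : Subgroup G, H.FiniteIndex → b ∈ H
      · refine le_max_of_le_left ?_
        have hgh : dhat G g h = Real.exp (-(sSup {n : ℕ | a ∈ subLE G n} : ℕ)) := by
          unfold dhat; rw [if_neg hga]
        rw [hgk, hgh, Real.exp_le_exp, neg_le_neg_iff, Nat.cast_le]
        refine le_sSup_AdhSet hk ?_
        rw [hab]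
        refine (subLE _ _).mul_mem (sSup_AdhSet_mem hga) ?_
        rw [mem_subLE_iff]
        exact fun H h1 _ => hgb H h1
      · have hgh : dhat G g h = Real.exp (-(sSup {n : ℕ | a ∈ subLE G n} : ℕ)) := by
          unfold dhat; rw [if_neg hga]
        have hhk : dhat G h k = Real.exp (-(sSup {n : ℕ | b ∈ subLE G n} : ℕ)) := by
          unfold dhat; rw [if_neg hgb]
        set Na := sSup {n : ℕ | a ∈ subLE G n}
        set Nb := sSup {n : ℕ | b ∈ subLE G n}
        have hmin : (min Na Nb) ∈ {n : ℕ | g * k⁻¹ ∈ subLE G n} := by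
          rw [Set.mem_setOf_eq, hab]
          exact (subLE _ _).mul_mem (subLE_anti (min_le_left _ _) (sSup_AdhSet_mem hga))
            (subLE_anti (min_le_right _ _) (sSup_AdhSet_mem hgb))
        have : (min Na Nb : ℕ) ≤ sSup {n : ℕ | g * k⁻¹ ∈ subLE G n} := le_sSup_AdhSet hk hmin
        rw [hgk, hgh, hhk]
        rcases min_choice Na Nb with hc | hc
        · refine le_max_of_le_left ?_
          rw [Real.exp_le_exp, neg_le_neg_iff, Nat.cast_le, ← hc]
          exact this
        · refine le_max_of_le_right ?_
          rw [Real.exp_le_exp, neg_le_neg_iff, Nat.cast_le, ← hc]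
          exact this
section Ultra
variable {G Ghat : Type*} [Group G] [MetricSpace Ghat]

lemma ghat_ultra (ι : G → Ghat) (hι : ∀ g h : G, dist (ι g) (ι h) = dhat G g h)
    (hdense : DenseRange ι) (x y z : Ghat) : dist x z ≤ max (dist x y) (dist y z) := by
  refine le_of_forall_pos_le_add fun ε hε => ?_
  have h4 : 0 < ε / 4 := by linarith
  obtain ⟨a, ha⟩ := Metric.denseRange_iff.mp hdense x (ε / 4) h4
  obtain ⟨b, hb⟩ := Metric.denseRange_iff.mp hdense y (ε / 4) h4
  obtain ⟨c, hc⟩ := Metric.denseRange_iff.mp hdense z (ε / 4) h4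
  have hac : dist (ι a) (ι c) ≤ max (dist (ι a) (ι b)) (dist (ι b) (ι c)) := by
    rw [hι, hι, hι]; exact dhat_ultra a b c
  have t1 := dist_triangle4 (ι a) x y (ι b)
  have t2 := dist_triangle4 (ι b) y z (ι c)
  have t0 := dist_triangle4 x (ι a) (ι c) z
  have e1 : dist (ι a) x = dist x (ι a) := dist_comm _ _
  have e2 : dist (ι b) y = dist y (ι b) := dist_comm _ _
  have e3 : dist (ι c) z = dist z (ι c) := dist_comm _ _
  have m1 : dist (ι a) (ι b) ≤ dist x y + ε / 2 := by linarith
  have m2 : dist (ι b) (ι c) ≤ dist y z + ε / 2 := by linarith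
  have m3 : max (dist (ι a) (ι b)) (dist (ι b) (ι c)) ≤ max (dist x y) (dist y z) + ε / 2 :=
    max_le (m1.trans (add_le_add (le_max_left _ _) le_rfl))
      (m2.trans (add_le_add (le_max_right _ _) le_rfl))
  have := hac.trans m3
  linarith

lemma ultra_preconnected_subsingleton
    (hu : ∀ x y z : Ghat, dist x z ≤ max (dist x y) (dist y z))
    (C : Set Ghat) (hC : IsPreconnected C) : C.Subsingleton := by
  intro x hx y hy
  by_contra hne
  have hρ : 0 < dist x y := dist_pos.mpr hne
  set U : Set Ghat := {z | dist x z < dist x y} with hU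
  have hopen : IsOpen U := isOpen_lt (continuous_const.dist continuous_id) continuous_const
  have hclosed : IsClosed U := by
    rw [← isOpen_compl_iff, Metric.isOpen_iff]
    intro z hz
    refine ⟨dist x y, hρ, fun w hw => ?_⟩
    simp only [Set.mem_compl_iff, Set.mem_setOf_eq, not_lt, U] at hz ⊢
    by_contra hlt
    push_neg at hlt
    have h1 := hu x w z
    have h2 : dist w z < dist x y := Metric.mem_ball.mp hw
    have : dist x z < dist x y := lt_of_le_of_lt h1 (max_lt hlt h2)
    linarith
  have hsub : C ⊆ U := hC.subset_isClopen ⟨hclosed, hopen⟩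
    ⟨x, hx, by simp [U, hρ]⟩
  have := hsub hy
  simp only [Set.mem_setOf_eq, U] at this
  exact absurd this (lt_irrefl _)

end Ultra
set_option linter.unusedSectionVars false
section SolLayer
variable {G Ghat Xt : Type*} [Group G] [MulAction G Xt] [MetricSpace Ghat] [MetricSpace Xt]

/-- The diagonal action of `g : G` on `Ghat × Xt`. -/
def rhoAct (act : G → Ghat → Ghat) (g : G) (z : Ghat × Xt) : Ghat × Xt := (act g z.1, g • z.2)

variable (act : G → Ghat → Ghat)

lemma solRel_equivalence (hact1 : ∀ γ : Ghat, act 1 γ = γ)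
    (hactmul : ∀ (g h : G) (γ : Ghat), act g (act h γ) = act (g * h) γ) :
    Equivalence (solRel (Xt := Xt) act) := by
  constructor
  · exact fun a => ⟨1, hact1 a.1, one_smul _ _⟩
  · rintro a b ⟨g, h1, h2⟩
    exact ⟨g⁻¹, by rw [← h1, hactmul, inv_mul_cancel, hact1], by rw [← h2, inv_smul_smul]⟩
  · rintro a b c ⟨g, h1, h2⟩ ⟨g', h1', h2'⟩
    exact ⟨g' * g, by rw [← h1', ← h1, hactmul], by rw [← h2', ← h2, mul_smul]⟩

lemma msol_mk_eq_iff (hact1 : ∀ γ : Ghat, act 1 γ = γ)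
    (hactmul : ∀ (g h : G) (γ : Ghat), act g (act h γ) = act (g * h) γ) {a b : Ghat × Xt} :
    Quot.mk (solRel (Xt := Xt) act) a = Quot.mk _ b ↔ solRel act a b :=
  ⟨fun h => ((solRel_equivalence act hact1 hactmul).eqvGen_iff).mp (Quot.eqvGen_exact h),
    Quot.sound⟩

lemma rhoAct_dist (hactiso : ∀ g : G, Isometry (act g))
    (hiso : ∀ g : G, Isometry fun x : Xt => g • x) (g : G) (a b : Ghat × Xt) :
    dist (rhoAct act g a) (rhoAct act g b) = dist a b := by
  simp only [rhoAct, Prod.dist_eq]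
  rw [(hactiso g).dist_eq, (hiso g).dist_eq]

lemma rhoAct_isometry (hactiso : ∀ g : G, Isometry (act g))
    (hiso : ∀ g : G, Isometry fun x : Xt => g • x) (g : G) :
    Isometry (rhoAct (Xt := Xt) act g) :=
  Isometry.of_dist_eq (rhoAct_dist act hactiso hiso g)

lemma rhoAct_inv_apply (hact1 : ∀ γ : Ghat, act 1 γ = γ)
    (hactmul : ∀ (g h : G) (γ : Ghat), act g (act h γ) = act (g * h) γ) (g : G)
    (z : Ghat × Xt) : rhoAct act g⁻¹ (rhoAct act g z) = z := by
  simp only [rhoAct]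
  rw [hactmul, inv_mul_cancel, hact1, inv_smul_smul]

lemma solrel_of_rho {g : G} {a b : Ghat × Xt} (h : rhoAct act g a = b) : solRel act a b :=
  ⟨g, congrArg Prod.fst h, congrArg Prod.snd h⟩

lemma isOpenMap_msol_mk (hact1 : ∀ γ : Ghat, act 1 γ = γ)
    (hactmul : ∀ (g h : G) (γ : Ghat), act g (act h γ) = act (g * h) γ)
    (hactiso : ∀ g : G, Isometry (act g))
    (hiso : ∀ g : G, Isometry fun x : Xt => g • x) :
    IsOpenMap (Quot.mk (solRel (Xt := Xt) act)) := by
  intro U hU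
  have heq : Quot.mk (solRel act) ⁻¹' (Quot.mk (solRel act) '' U) = ⋃ g : G, rhoAct act g '' U := by
    ext z
    simp only [Set.mem_preimage, Set.mem_image, Set.mem_iUnion]
    constructor
    · rintro ⟨u, hu, h⟩
      obtain ⟨g, h1, h2⟩ := (msol_mk_eq_iff act hact1 hactmul).mp h
      exact ⟨g, u, hu, Prod.ext h1 h2⟩
    · rintro ⟨g, u, hu, rfl⟩
      exact ⟨u, hu, Quot.sound ⟨g, rfl, rfl⟩⟩
  have hopen : IsOpen (Quot.mk (solRel act) ⁻¹' (Quot.mk (solRel act) '' U)) := by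
    rw [heq]
    refine isOpen_iUnion fun g => ?_
    have himg : rhoAct act g '' U = rhoAct act g⁻¹ ⁻¹' U := by
      ext z
      constructor
      · rintro ⟨u, hu, rfl⟩
        simpa [rhoAct_inv_apply act hact1 hactmul g u] using hu
      · intro hz
        refine ⟨rhoAct act g⁻¹ z, hz, ?_⟩
        have := rhoAct_inv_apply act hact1 hactmul g⁻¹ z
        rwa [inv_inv] at this
    rw [himg]
    exact IsOpen.preimage (rhoAct_isometry act hactiso hiso g⁻¹).continuous hU
  exact isOpen_coinduced.mpr hopen
end SolLayer
section CoverLayer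
variable {X Xt G : Type*} [MetricSpace X] [MetricSpace Xt] [Group G] [MulAction G Xt]

lemma cov_surjective [PreconnectedSpace X] [Nonempty Xt]
    (p : Xt → X) (hcov : IsCoveringMap p) : Function.Surjective p := by
  have hopen : IsOpen (Set.range p) := hcov.isOpenMap.isOpen_range
  have hclosed : IsClosed (Set.range p) := by
    rw [← isOpen_compl_iff, isOpen_iff_mem_nhds]
    intro x hx
    obtain ⟨hd, T, hxT, hTo, -, H, -⟩ := hcov x
    refine Filter.mem_of_superset (hTo.mem_nhds hxT) fun y hy => ?_
    rintro ⟨z, rfl⟩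
    exact hx ⟨((H ⟨z, hy⟩).2 : Xt), (H ⟨z, hy⟩).2.2⟩
  have : Set.range p = Set.univ :=
    IsClopen.eq_univ ⟨hclosed, hopen⟩ ⟨p (Classical.arbitrary Xt), Set.mem_range_self _⟩
  exact Set.range_eq_univ.mp this

lemma local_section_data [PreconnectedSpace X] [Nonempty Xt]
    (p : Xt → X) (hcov : IsCoveringMap p)
    (hloc : ∀ xt : Xt, ∃ ε > 0, ∀ y ∈ Metric.ball xt ε, ∀ z ∈ Metric.ball xt ε,
      dist (p y) (p z) = dist y z) (x : X) :
    ∃ (ε η : ℝ) (y : Xt) (sct : X → Xt), 0 < ε ∧ 0 < η ∧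
      (∀ a ∈ Metric.ball y ε, ∀ b ∈ Metric.ball y ε, dist (p a) (p b) = dist a b) ∧
      ContinuousOn sct (Metric.ball x η) ∧
      ∀ x' ∈ Metric.ball x η, p (sct x') = x' ∧ sct x' ∈ Metric.ball y (ε / 4) := by
  obtain ⟨y, hy⟩ := cov_surjective p hcov x
  obtain ⟨ε, hε, hisob⟩ := hloc y
  haveI : Nonempty (p ⁻¹' {x}) := ⟨⟨y, hy⟩⟩
  obtain ⟨T, hxT⟩ : ∃ T : Bundle.Trivialization (p ⁻¹' {x}) p, x ∈ T.baseSet :=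
    ⟨_, (hcov x).mem_toTrivialization_baseSet⟩
  have hy_src : y ∈ T.source := T.mem_source.mpr (by rw [hy]; exact hxT)
  set c := (T y).2 with hc
  set sct : X → Xt := fun x' => T.toOpenPartialHomeomorph.symm (x', c) with hsct
  have hsct_x : sct x = y := by
    have h1 : (T y).1 = p y := T.coe_fst hy_src
    have h2 : ((x : X), c) = T y := by
      rw [hc]; exact Prod.ext (by rw [h1, hy]) rfl
    rw [hsct]
    simp only
    rw [h2]
    exact T.toOpenPartialHomeomorph.left_inv hy_src
  have hcont : ContinuousOn sct T.baseSet := by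
    refine T.toOpenPartialHomeomorph.continuousOn_symm.comp
      (Continuous.continuousOn (continuous_id.prodMk continuous_const)) fun x' hx' => ?_
    exact T.mem_target.mpr hx'
  have hsec : ∀ x' ∈ T.baseSet, p (sct x') = x' :=
    fun x' hx' => T.proj_symm_apply (T.mem_target.mpr hx')
  have hSopen : IsOpen (T.baseSet ∩ sct ⁻¹' (Metric.ball y (ε / 4))) :=
    hcont.isOpen_inter_preimage T.open_baseSet Metric.isOpen_ball
  have hxS : x ∈ T.baseSet ∩ sct ⁻¹' (Metric.ball y (ε / 4)) :=
    ⟨hxT, by simp [hsct_x, Metric.mem_ball, hε]⟩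
  obtain ⟨η, hη, hball⟩ := Metric.isOpen_iff.mp hSopen x hxS
  refine ⟨ε, η, y, sct, hε, hη, hisob, hcont.mono fun z hz => (hball hz).1, fun x' hx' => ?_⟩
  exact ⟨hsec x' (hball hx').1, (hball hx').2⟩

lemma uniform_radius_and_domain [PreconnectedSpace X] [Nonempty Xt] [CompactSpace X]
    (p : Xt → X) (hcov : IsCoveringMap p)
    (hloc : ∀ xt : Xt, ∃ ε > 0, ∀ y ∈ Metric.ball xt ε, ∀ z ∈ Metric.ball xt ε,
      dist (p y) (p z) = dist y z)
    (hiso : ∀ g : G, Isometry fun x : Xt => g • x)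
    (hdeck : ∀ (g : G) (x : Xt), p (g • x) = p x)
    (hfib : ∀ x y : Xt, p x = p y → ∃ g : G, g • x = y) :
    ∃ r > 0, (∀ y : Xt, ∀ a ∈ Metric.ball y r, ∀ b ∈ Metric.ball y r,
        dist (p a) (p b) = dist a b) ∧
      ∃ D : Set Xt, IsCompact D ∧ ∀ z : Xt, ∃ g : G, g • z ∈ D := by
  have hdata := local_section_data p hcov hloc
  choose ε η Y sct hε hη hisob hcont hsec using hdata
  have hcover : (Set.univ : Set X) ⊆ ⋃ x : X, Metric.ball x (η x / 2) := by
    intro x _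
    exact Set.mem_iUnion.mpr ⟨x, by simp [Metric.mem_ball, half_pos (hη x)]⟩
  obtain ⟨F, hF⟩ := isCompact_univ.elim_finite_subcover _
    (fun x => Metric.isOpen_ball) hcover
  have hXne : Nonempty X := ⟨p (Classical.arbitrary Xt)⟩
  have hFne : F.Nonempty := by
    obtain ⟨x⟩ := hXne
    obtain ⟨x', hx', _⟩ := Set.mem_iUnion₂.mp (hF (Set.mem_univ x))
    exact ⟨x', hx'⟩
  set r := F.inf' hFne fun x => min (ε x / 2) (η x / 2) with hr
  have hrpos : 0 < r := by
    rw [hr, Finset.lt_inf'_iff]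
    exact fun x _ => lt_min (half_pos (hε x)) (half_pos (hη x))
  -- membership in the cover
  have hmem : ∀ z : X, ∃ x ∈ F, z ∈ Metric.ball x (η x / 2) := by
    intro z
    obtain ⟨x, hx, hz⟩ := Set.mem_iUnion₂.mp (hF (Set.mem_univ z))
    exact ⟨x, hx, hz⟩
  have hrle : ∀ x ∈ F, r ≤ ε x / 2 := fun x hx =>
    (Finset.inf'_le _ hx).trans (min_le_left _ _)
  refine ⟨r, hrpos, ?_, ?_⟩
  · -- uniform isometry radius
    intro y a ha b hb
    obtain ⟨x, hxF, hpy⟩ := hmem (p y)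
    have hpyball : p y ∈ Metric.ball x (η x) :=
      Metric.ball_subset_ball (by linarith [hη x]) hpy
    obtain ⟨hpw, hwball⟩ := hsec x (p y) hpyball
    set w := sct x (p y) with hwdef
    obtain ⟨g, hg⟩ := hfib y w (by rw [hpw])
    -- the map is isometric on ball w (ε x / 2)
    have hkey : ∀ u ∈ Metric.ball w (ε x / 2), ∀ v ∈ Metric.ball w (ε x / 2),
        dist (p u) (p v) = dist u v := by
      intro u hu v hv
      have h1 : u ∈ Metric.ball (Y x) (ε x) := by
        rw [Metric.mem_ball] at hu hwball ⊢
        have := dist_triangle u w (Y x)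
        linarith [hε x]
      have h2 : v ∈ Metric.ball (Y x) (ε x) := by
        rw [Metric.mem_ball] at hv hwball ⊢
        have := dist_triangle v w (Y x)
        linarith [hε x]
      exact hisob x u h1 v h2
    have hdg : ∀ u : Xt, dist (g • u) (g • y) = dist u y := fun u => (hiso g).dist_eq u y
    have hmemb : ∀ u, u ∈ Metric.ball y r → g • u ∈ Metric.ball w (ε x / 2) := by
      intro u hu
      rw [Metric.mem_ball] at hu ⊢
      rw [← hg]
      rw [(hiso g).dist_eq]
      exact lt_of_lt_of_le hu (hrle x hxF)
    have hga := hmemb a ha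
    have hgb := hmemb b hb
    calc dist (p a) (p b) = dist (p (g • a)) (p (g • b)) := by rw [hdeck, hdeck]
      _ = dist (g • a) (g • b) := hkey _ hga _ hgb
      _ = dist a b := (hiso g).dist_eq a b
  · -- compact fundamental domain
    refine ⟨⋃ x ∈ F, sct x '' Metric.closedBall x (η x / 2), ?_, ?_⟩
    · refine F.finite_toSet.isCompact_biUnion fun x hx => ?_
      refine (isCompact_closedBall x _).image_of_continuousOn ((hcont x).mono ?_)
      exact Metric.closedBall_subset_ball (by linarith [hη x])
    · intro z
      obtain ⟨x, hxF, hpz⟩ := hmem (p z)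
      have hpzball : p z ∈ Metric.ball x (η x) :=
        Metric.ball_subset_ball (by linarith [hη x]) hpz
      obtain ⟨hpw, _⟩ := hsec x (p z) hpzball
      obtain ⟨g, hg⟩ := hfib z (sct x (p z)) (by rw [hpw])
      refine ⟨g, ?_⟩
      rw [hg]
      exact Set.mem_biUnion hxF ⟨p z, Metric.ball_subset_closedBall hpz, rfl⟩
end CoverLayer
section Core

lemma dist_snd_le_prod {α β : Type*} [PseudoMetricSpace α] [PseudoMetricSpace β]
    (x y : α × β) : dist x.2 y.2 ≤ dist x y := by
  rw [Prod.dist_eq]; exact le_max_right _ _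

set_option maxHeartbeats 1000000 in
theorem leaf_displacement_bound
    {X Xt G Ghat : Type*} [MetricSpace X] [MetricSpace Xt] [MetricSpace Ghat]
    [CompactSpace X] [CompactSpace Ghat] [Nonempty Xt]
    [PathConnectedSpace X]
    [Group G] [MulAction G Xt]
    (p : Xt → X) (hcov : IsCoveringMap p)
    (hloc : ∀ xt : Xt, ∃ ε > 0, ∀ y ∈ Metric.ball xt ε, ∀ z ∈ Metric.ball xt ε,
      dist (p y) (p z) = dist y z)
    (hiso : ∀ g : G, Isometry fun x : Xt => g • x)
    (hdeck : ∀ (g : G) (x : Xt), p (g • x) = p x)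
    (hfib : ∀ x y : Xt, p x = p y → ∃ g : G, g • x = y)
    (hfree : ∀ (g : G) (x : Xt), g • x = x → g = 1)
    (hRF : (⨅ (H : Subgroup G) (_ : H.FiniteIndex), H) = ⊥)
    (ι : G → Ghat) (hι : ∀ g h : G, dist (ι g) (ι h) = dhat G g h)
    (hdense : DenseRange ι)
    (act : G → Ghat → Ghat)
    (hact1 : ∀ γ : Ghat, act 1 γ = γ)
    (hactmul : ∀ (g h : G) (γ : Ghat), act g (act h γ) = act (g * h) γ)
    (hactiso : ∀ g : G, Isometry (act g))
    (hactι : ∀ g h : G, act g (ι h) = ι (h * g⁻¹))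
    (F : C(MSol (Xt := Xt) act, MSol (Xt := Xt) act))
    (hFh : ContinuousMap.Homotopic F (ContinuousMap.id _)) :
    ∃ C : ℝ, ∀ q : Xt, dist (leafRestrict act ι (⇑F) q) q ≤ C := by
  classical
  have _inst : PreconnectedSpace X := PathConnectedSpace.connectedSpace.toPreconnectedSpace
  obtain ⟨r, hrpos, claimA, D, hDcomp, hDcov⟩ :=
    uniform_radius_and_domain (G := G) p hcov hloc hiso hdeck hfib
  -- systole bound
  have hsys : ∀ (g : G) (x : Xt), dist (g • x) x < r → g = 1 := by
    intro g x h
    have h1 : dist (p (g • x)) (p x) = dist (g • x) x :=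
      claimA x (g • x) (Metric.mem_ball.mpr h) x (Metric.mem_ball.mpr (by simpa using hrpos))
    rw [hdeck] at h1
    have h2 : dist (g • x) x = 0 := by rw [← h1, dist_self]
    exact hfree g x (dist_eq_zero.mp h2)
  -- injectivity of the baseleaf map
  have hinj : Function.Injective (mleaf (Xt := Xt) act ι) := by
    intro x y h
    obtain ⟨g, h1, h2⟩ := (msol_mk_eq_iff act hact1 hactmul).mp h
    have h3 : act g (ι 1) = ι g⁻¹ := by rw [hactι, one_mul]
    rw [h3] at h1
    have h4 : dhat G g⁻¹ 1 = 0 := by rw [← hι, h1, dist_self]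
    have h5 : ∀ H : Subgroup G, H.FiniteIndex → g⁻¹ ∈ H := by
      have := (dhat_zero_iff g⁻¹ 1).mp h4
      simpa using this
    have h6 : g⁻¹ ∈ (⊥ : Subgroup G) := by
      rw [← hRF, Subgroup.mem_iInf]
      intro H
      rw [Subgroup.mem_iInf]
      exact fun hH => h5 H hH
    have h7 : g = 1 := by
      have := Subgroup.mem_bot.mp h6
      rwa [inv_eq_one] at this
    rw [h7, one_smul] at h2
    exact h2
  -- compact set containing the baseleaf
  set K : Set (MSol (Xt := Xt) act) :=
    Quot.mk (solRel act) '' (Set.univ ×ˢ D) with hK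
  have hKcomp : IsCompact K := (isCompact_univ.prod hDcomp).image continuous_quot_mk
  have hleafK : ∀ q : Xt, mleaf act ι q ∈ K := by
    intro q
    obtain ⟨g, hg⟩ := hDcov q
    have heq : mleaf act ι q = Quot.mk (solRel act) (act g (ι 1), g • q) :=
      Quot.sound ⟨g, rfl, rfl⟩
    rw [heq]
    exact ⟨(act g (ι 1), g • q), ⟨Set.mem_univ _, hg⟩, rfl⟩
  obtain ⟨H⟩ := hFh
  set ε := r / 3 with hε
  have hεpos : 0 < ε := by rw [hε]; linarith
  set S : Set ((Ghat × Xt) × (Ghat × Xt)) := {z | dist z.1 z.2 < ε} with hS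
  have hSopen : IsOpen S := isOpen_lt (continuous_dist.comp
    (continuous_fst.prodMk continuous_snd)) continuous_const
  set R : Set (MSol (Xt := Xt) act × MSol (Xt := Xt) act) :=
    (Prod.map (Quot.mk (solRel act)) (Quot.mk (solRel act))) '' S with hR
  have hπopen : IsOpenMap (Quot.mk (solRel (Xt := Xt) act)) :=
    isOpenMap_msol_mk act hact1 hactmul hactiso hiso
  have hRopen : IsOpen R := (hπopen.prodMap hπopen) S hSopen
  have hRmem : ∀ v w : MSol (Xt := Xt) act, (v, w) ∈ R ↔
      ∃ a b : Ghat × Xt, Quot.mk (solRel act) a = v ∧ Quot.mk (solRel act) b = w ∧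
        dist a b < ε := by
    intro v w
    constructor
    · rintro ⟨⟨a, b⟩, hab, heq⟩
      rw [Prod.ext_iff] at heq
      exact ⟨a, b, heq.1, heq.2, hab⟩
    · rintro ⟨a, b, h1, h2, h3⟩
      exact ⟨(a, b), h3, Prod.ext h1 h2⟩
  -- uniform continuity of the homotopy over K
  have hunif : ∃ δ > 0, ∀ u ∈ K, ∀ s t : unitInterval, |(s : ℝ) - (t : ℝ)| < δ →
      (H (s, u), H (t, u)) ∈ R := by
    set Φ : MSol (Xt := Xt) act × unitInterval × unitInterval →
        MSol (Xt := Xt) act × MSol (Xt := Xt) act :=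
      fun z => (H (z.2.1, z.1), H (z.2.2, z.1)) with hΦ
    have hΦcont : Continuous Φ := by
      refine Continuous.prodMk ?_ ?_
      · exact H.continuous.comp ((continuous_fst.comp continuous_snd).prodMk continuous_fst)
      · exact H.continuous.comp ((continuous_snd.comp continuous_snd).prodMk continuous_fst)
    set A := Φ ⁻¹' R with hA
    have hAopen : IsOpen A := hRopen.preimage hΦcont
    have hdiag : ∀ u ∈ K, ∀ s : unitInterval, (u, s, s) ∈ A := by
      intro u _ s
      obtain ⟨a, ha⟩ := Quot.exists_rep (H (s, u))
      exact (hRmem _ _).mpr ⟨a, a, ha, ha, by simpa using hεpos⟩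
    set Cl := (K ×ˢ (Set.univ ×ˢ Set.univ : Set (unitInterval × unitInterval))) ∩ Aᶜ with hCl
    have hClcomp : IsCompact Cl :=
      ((hKcomp.prod (isCompact_univ.prod isCompact_univ))).inter_right
        (isClosed_compl_iff.mpr hAopen)
    set φ : MSol (Xt := Xt) act × unitInterval × unitInterval → ℝ :=
      fun z => |(z.2.1 : ℝ) - (z.2.2 : ℝ)| with hφ
    have hφcont : Continuous φ := by
      apply Continuous.abs
      exact (continuous_subtype_val.comp (continuous_fst.comp continuous_snd)).sub
        (continuous_subtype_val.comp (continuous_snd.comp continuous_snd))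
    rcases Cl.eq_empty_or_nonempty with hemp | hne
    · refine ⟨1, one_pos, fun u hu s t _ => ?_⟩
      by_contra hnA
      have hc : (u, s, t) ∈ Cl := ⟨⟨hu, Set.mem_univ _, Set.mem_univ _⟩, hnA⟩
      rw [hemp] at hc
      exact hc
    · obtain ⟨z₀, hz₀, hmin⟩ := hClcomp.exists_isMinOn hne hφcont.continuousOn
      refine ⟨φ z₀, ?_, ?_⟩
      · rcases lt_or_eq_of_le (abs_nonneg ((z₀.2.1 : ℝ) - (z₀.2.2 : ℝ))) with h | h
        · exact h
        · exfalso
          have h0 : (z₀.2.1 : ℝ) - (z₀.2.2 : ℝ) = 0 := abs_eq_zero.mp h.symm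
          have hz12 : z₀.2.1 = z₀.2.2 := Subtype.ext (by linarith)
          have hmemA : (z₀.1, z₀.2.1, z₀.2.1) ∈ A := hdiag z₀.1 hz₀.1.1 z₀.2.1
          have heqz : (z₀.1, z₀.2.1, z₀.2.1) = z₀ := Prod.ext rfl (Prod.ext rfl hz12)
          rw [heqz] at hmemA
          exact hz₀.2 hmemA
      · intro u hu s t hst
        by_contra hnA
        have hmem : (u, s, t) ∈ Cl := ⟨⟨hu, Set.mem_univ _, Set.mem_univ _⟩, hnA⟩
        have := hmin hmem
        simp only [hφ] at this
        exact absurd hst (not_lt.mpr this)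
  obtain ⟨δ, hδpos, hδ⟩ := hunif
  obtain ⟨n, hn⟩ := exists_nat_one_div_lt hδpos
  set N : ℕ := n + 1 with hN
  have hNpos : (0 : ℝ) < N := by positivity
  have h1N : 1 / (N : ℝ) < δ := by rw [hN]; push_cast; exact hn
  refine ⟨N * ε, fun q => ?_⟩
  set u := mleaf (Xt := Xt) act ι q with hu
  set σt : ℝ → unitInterval := Set.projIcc 0 1 zero_le_one with hσt
  set c : ℝ → MSol (Xt := Xt) act := fun s => H (σt s, u) with hc
  have hccont : Continuous c :=
    H.continuous.comp ((continuous_projIcc).prodMk continuous_const)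
  have hcR : ∀ s t : ℝ, |s - t| < δ → (c s, c t) ∈ R := by
    intro s t hst
    refine hδ u (hleafK q) (σt s) (σt t) ?_
    have hlip := (LipschitzWith.projIcc (a := (0 : ℝ)) (b := 1) zero_le_one).dist_le_mul s t
    rw [Subtype.dist_eq, Real.dist_eq, Real.dist_eq] at hlip
    push_cast at hlip
    calc |((σt s : ℝ)) - ((σt t : ℝ))| ≤ 1 * |s - t| := hlip
      _ < δ := by rwa [one_mul]
  -- inductive chain lifting along the homotopy track
  have key : ∀ i : ℕ, i ≤ N → ∃ b : Ghat × Xt,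
      Quot.mk (solRel act) b = c (1 - i / N) ∧ b.1 = ι 1 ∧ dist b.2 q ≤ i * ε := by
    intro i
    induction i with
    | zero =>
      intro _
      refine ⟨(ι 1, q), ?_, rfl, by simp⟩
      have hσ1 : σt 1 = 1 := by
        rw [hσt]
        exact Set.projIcc_right zero_le_one
      simp only [Nat.cast_zero, zero_div, sub_zero, hc]
      rw [hσ1, H.apply_one]
      rfl
    | succ i ih =>
      intro hiN
      obtain ⟨b, hbmk, hb1, hbd⟩ := ih (Nat.le_of_succ_le hiN)
      obtain ⟨s, hs⟩ : ∃ x : ℝ, x = 1 - (i : ℝ) / N := ⟨_, rfl⟩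
      obtain ⟨s', hs'⟩ : ∃ x : ℝ, x = 1 - ((i + 1 : ℕ) : ℝ) / N := ⟨_, rfl⟩
      rw [← hs] at hbmk
      have hss' : s - s' = 1 / N := by rw [hs, hs']; push_cast; ring
      have h1Npos : (0 : ℝ) < 1 / N := by positivity
      have hs'lt : s' < s := by linarith
      set J : Set ℝ := Set.Icc s' s with hJ
      have hJmem : s ∈ J := ⟨le_of_lt hs'lt, le_refl s⟩
      have hJ'mem : s' ∈ J := ⟨le_refl s', le_of_lt hs'lt⟩
      have hJδ : ∀ t ∈ J, |s - t| < δ := by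
        intro t ht
        have h1 : |s - t| ≤ 1 / N := by
          rw [abs_of_nonneg (by linarith [ht.2])]
          linarith [ht.1]
        exact lt_of_le_of_lt h1 h1N
      -- uniqueness of representatives in the small ball
      have huniqU : ∀ z z' : Ghat × Xt, z ∈ Metric.ball b ε → z' ∈ Metric.ball b ε →
          Quot.mk (solRel act) z = Quot.mk (solRel act) z' → z = z' := by
        intro z z' hz hz' hmk
        obtain ⟨g, hg1, hg2⟩ := (msol_mk_eq_iff act hact1 hactmul).mp hmk
        have hd1 : dist z z' ≤ dist z b + dist b z' := dist_triangle _ _ _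
        have hd2 : dist z.2 z'.2 ≤ dist z z' := dist_snd_le_prod z z'
        rw [Metric.mem_ball] at hz hz'
        rw [dist_comm] at hz'
        have hd3 : dist (g • z.2) z.2 < r := by
          rw [hg2, dist_comm]
          have : dist z.2 z'.2 < 2 * ε := by linarith
          rw [hε] at this
          linarith
        have hg1' : g = 1 := hsys g z.2 hd3
        rw [hg1'] at hg1 hg2
        rw [hact1] at hg1
        rw [one_smul] at hg2
        exact Prod.ext hg1 hg2
      -- every time in J has a representative in the small ball
      have hJall : ∀ t ∈ J, ∃ z, z ∈ Metric.ball b ε ∧ Quot.mk (solRel act) z = c t := by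
        intro t ht
        obtain ⟨a, a', h1, h2, h3⟩ := (hRmem (c s) (c t)).mp (hcR s t (hJδ t ht))
        have hab : Quot.mk (solRel act) a = Quot.mk (solRel act) b := by rw [h1, hbmk]
        obtain ⟨g, hg1, hg2⟩ := (msol_mk_eq_iff act hact1 hactmul).mp hab
        have hρ : rhoAct act g a = b := Prod.ext hg1 hg2
        refine ⟨rhoAct act g a', ?_, ?_⟩
        · rw [Metric.mem_ball, ← hρ, rhoAct_dist act hactiso hiso, dist_comm]
          exact h3
        · exact (Quot.sound (⟨g, rfl, rfl⟩ : solRel act a' (rhoAct act g a'))).symm.trans h2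
      -- the local continuous lift
      set ψ : ℝ → Ghat × Xt := fun t =>
        if h : ∃ z, z ∈ Metric.ball b ε ∧ Quot.mk (solRel act) z = c t then h.choose else b
        with hψdef
      have hψspec : ∀ t ∈ J, ψ t ∈ Metric.ball b ε ∧ Quot.mk (solRel act) (ψ t) = c t := by
        intro t ht
        rw [hψdef]
        simp only [dif_pos (hJall t ht)]
        exact (hJall t ht).choose_spec
      have hψuniq : ∀ t ∈ J, ∀ z, z ∈ Metric.ball b ε → Quot.mk (solRel act) z = c t →
          ψ t = z := by
        intro t ht z hz hmk
        exact huniqU (ψ t) z (hψspec t ht).1 hz ((hψspec t ht).2.trans hmk.symm)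
      have hψs : ψ s = b := hψuniq s hJmem b (Metric.mem_ball_self hεpos) hbmk
      have hψcont : ContinuousOn ψ J := by
        intro t₀ ht₀
        have : Filter.Tendsto ψ (nhdsWithin t₀ J) (nhds (ψ t₀)) := by
          rw [Metric.tendsto_nhds]
          intro ρ hρ
          have hW : IsOpen (Metric.ball (ψ t₀) ρ ∩ Metric.ball b ε) :=
            Metric.isOpen_ball.inter Metric.isOpen_ball
          have hmemW : ψ t₀ ∈ Metric.ball (ψ t₀) ρ ∩ Metric.ball b ε :=
            ⟨Metric.mem_ball_self hρ, (hψspec t₀ ht₀).1⟩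
          have hVopen : IsOpen (Quot.mk (solRel act) ''
              (Metric.ball (ψ t₀) ρ ∩ Metric.ball b ε)) := hπopen _ hW
          have hcV : c t₀ ∈ Quot.mk (solRel act) ''
              (Metric.ball (ψ t₀) ρ ∩ Metric.ball b ε) :=
            ⟨ψ t₀, hmemW, (hψspec t₀ ht₀).2⟩
          have hnhds : c ⁻¹' (Quot.mk (solRel act) ''
              (Metric.ball (ψ t₀) ρ ∩ Metric.ball b ε)) ∈ nhds t₀ :=
            hccont.continuousAt.preimage_mem_nhds (hVopen.mem_nhds hcV)
          filter_upwards [nhdsWithin_le_nhds hnhds, self_mem_nhdsWithin] with t htV htJ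
          obtain ⟨w, hwmem, hwmk⟩ := htV
          rw [hψuniq t htJ w hwmem.2 hwmk]
          exact Metric.mem_ball.mp hwmem.1
        exact this
      -- the first coordinate is constant along J
      have hpre : IsPreconnected ((Prod.fst ∘ ψ) '' J) :=
        (isPreconnected_Icc).image _ (continuous_fst.comp_continuousOn hψcont)
      have hsub := ultra_preconnected_subsingleton (ghat_ultra ι hι hdense) _ hpre
      have hfst : (ψ s').1 = (ψ s).1 :=
        hsub ⟨s', hJ'mem, rfl⟩ ⟨s, hJmem, rfl⟩
      refine ⟨ψ s', ?_, ?_, ?_⟩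
      · rw [show (1 : ℝ) - ((i + 1 : ℕ) : ℝ) / N = s' from hs'.symm]
        exact (hψspec s' hJ'mem).2
      · rw [hfst, hψs, hb1]
      · have hd1 : dist (ψ s') b < ε := Metric.mem_ball.mp (hψspec s' hJ'mem).1
        have hd2 : dist (ψ s').2 b.2 ≤ dist (ψ s') b := dist_snd_le_prod _ _
        have hd3 : dist (ψ s').2 q ≤ dist (ψ s').2 b.2 + dist b.2 q := dist_triangle _ _ _
        push_cast
        push_cast at hbd
        linarith
  -- conclude
  obtain ⟨b, hbmk, hb1, hbd⟩ := key N le_rfl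
  have hNN : (1 : ℝ) - N / N = 0 := by field_simp; norm_num
  have hσ0 : σt 0 = 0 := by
    rw [hσt]
    exact Set.projIcc_left zero_le_one
  have hc0 : c (1 - N / N) = F u := by
    rw [hNN, hc]
    simp only
    rw [hσ0, H.apply_zero]
  have hbeq : (ι 1, b.2) = b := Prod.ext hb1.symm rfl
  have hFq : F u = mleaf act ι b.2 := by
    rw [← hc0, ← hbmk]
    show Quot.mk (solRel act) b = Quot.mk (solRel act) (ι 1, b.2)
    rw [hbeq]
  have hlr : leafRestrict act ι (⇑F) q = b.2 := by
    show Function.invFun (mleaf act ι) (F (mleaf act ι q)) = b.2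
    rw [← hu, hFq]
    exact Function.leftInverse_invFun hinj b.2
  rw [hlr]
  exact hbd

end Core




/-- **Statement 10.** If `f, g` are pointed continuous self-maps of the solenoid
`(sol X, σ, ∗)` with `f∘g` and `g∘f` homotopic to the identity, then the baseleaf
restrictions `(f∘g)_X̃` and `(g∘f)_X̃` displace points a uniformly bounded amount. -/
theorem leafRestrict_coarse_inverses
    (X Xt G Ghat : Type*) [MetricSpace X] [MetricSpace Xt] [MetricSpace Ghat]
    [CompactSpace X] [CompactSpace Ghat] [CompleteSpace Ghat] [Nonempty Xt]
    [PathConnectedSpace X] [LocallyPathConnectedSpace X]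
    [SimplyConnectedSpace Xt] [LocallyPathConnectedSpace Xt]
    [Group G] [Group.FG G] [MulAction G Xt]
    (hgeo : IsGeodesicMetricSpace X)
    (p : Xt → X) (hcov : IsCoveringMap p)
    (hloc : ∀ xt : Xt, ∃ ε > 0, ∀ y ∈ Metric.ball xt ε, ∀ z ∈ Metric.ball xt ε,
      dist (p y) (p z) = dist y z)
    (hiso : ∀ g : G, Isometry fun x : Xt => g • x)
    (hdeck : ∀ (g : G) (x : Xt), p (g • x) = p x)
    (hfib : ∀ x y : Xt, p x = p y → ∃ g : G, g • x = y)
    (hfree : ∀ (g : G) (x : Xt), g • x = x → g = 1)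
    (x₀ : X) (xt₀ : Xt) (hx₀ : p xt₀ = x₀) (e : G ≃* FundamentalGroup X x₀)
    (hRF : (⨅ (H : Subgroup G) (_ : H.FiniteIndex), H) = ⊥)
    (ι : G → Ghat) (hι : ∀ g h : G, dist (ι g) (ι h) = dhat G g h)
    (hdense : DenseRange ι)
    (act : G → Ghat → Ghat)
    (hact1 : ∀ γ : Ghat, act 1 γ = γ)
    (hactmul : ∀ (g h : G) (γ : Ghat), act g (act h γ) = act (g * h) γ)
    (hactiso : ∀ g : G, Isometry (act g))
    (hactι : ∀ g h : G, act g (ι h) = ι (h * g⁻¹))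
    (f g : C(MSol (Xt := Xt) act, MSol (Xt := Xt) act))
    (hf : f (mpt act ι xt₀) = mpt act ι xt₀)
    (hg : g (mpt act ι xt₀) = mpt act ι xt₀)
    (hfg : ContinuousMap.Homotopic (f.comp g) (ContinuousMap.id _))
    (hgf : ContinuousMap.Homotopic (g.comp f) (ContinuousMap.id _)) :
    ∃ C : ℝ, ∀ q : Xt,
      dist (leafRestrict act ι (f.comp g) q) q ≤ C ∧
      dist (leafRestrict act ι (g.comp f) q) q ≤ C := by

  obtain ⟨C₁, h₁⟩ := leaf_displacement_bound p hcov hloc hiso hdeck hfib hfree hRF ι hι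
    hdense act hact1 hactmul hactiso hactι (f.comp g) hfg
  obtain ⟨C₂, h₂⟩ := leaf_displacement_bound p hcov hloc hiso hdeck hfib hfree hRF ι hι
    hdense act hact1 hactmul hactiso hactι (g.comp f) hgf
  exact ⟨max C₁ C₂, fun q =>
    ⟨(h₁ q).trans (le_max_left _ _), (h₂ q).trans (le_max_right _ _)⟩⟩
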